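/- arXiv:2512.17270 — 4 statements merged into one kernel-verified Lean document; each statement's English description precedes it below -/
import Mathlib

section
/- Let U, A, D be finite nonempty types and let P, Q be probability mass functions on the product U × A × D. Assume that for each coordinate z ∈ {u, a, d} and for every value of that coordinate having positive probability under both P and Q, the conditional distribution of the remaining two coordinates given that value of coordinate z is the same under P and Q. Let E, Ĥ, c be real numbers with Ĥ ≥ 0 and c ≥ 0, and suppose E ≤ Ĥ · √(2 · D_JS(P ‖ Q)) + c. Then E ≤ √(2/3) · Ĥ · (√(D_JS(P_u ‖ Q_u)) + √(D_JS(P_a ‖ Q_a)) + √(D_JS(P_d ‖ Q_d))) + c, where P_u, P_a, P_d (resp. Q_u, Q_a, Q_d) denote the one-dimensional marginals of P (resp. Q) on U, A, D. -/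
open scoped BigOperators ENNReal

noncomputable section

/-- Kullback–Leibler divergence between two PMFs on a finite type (real-valued;
with the convention that the summand is `0` when `μ x = 0`). -/
def klDiv {α : Type*} [Fintype α] (μ ν : PMF α) : ℝ :=
  ∑ x, if μ x = 0 then 0 else (μ x).toReal * Real.log ((μ x).toReal / (ν x).toReal)

/-- The mixture `½ (μ + ν)` of two PMFs on a finite type. -/
def mix {α : Type*} [Fintype α] (μ ν : PMF α) : PMF α :=
  ⟨fun x => (μ x + ν x) / 2, by
    have h1 : (∑ x, μ x) = 1 := by simpa [tsum_fintype] using μ.tsum_coe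
    have h2 : (∑ x, ν x) = 1 := by simpa [tsum_fintype] using ν.tsum_coe
    have key : (∑ x, (μ x + ν x) / 2) = 1 := by
      simp only [div_eq_mul_inv, ← Finset.sum_mul]
      rw [Finset.sum_add_distrib, h1, h2, one_add_one_eq_two]
      exact ENNReal.mul_inv_cancel two_ne_zero (by simp)
    simpa [key] using hasSum_fintype (fun x => (μ x + ν x) / 2)⟩

/-- Jensen–Shannon divergence: `½ D_KL(μ ‖ M) + ½ D_KL(ν ‖ M)` with `M = ½(μ + ν)`. -/
def jsDiv {α : Type*} [Fintype α] (μ ν : PMF α) : ℝ :=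
  klDiv μ (mix μ ν) / 2 + klDiv ν (mix μ ν) / 2

/-- Product of two PMFs. -/
def prodPMF {α β : Type*} (μ : PMF α) (ν : PMF β) : PMF (α × β) :=
  μ.bind fun a => ν.map (Prod.mk a)

/-- Mutual information of a joint PMF: `D_KL(μ ‖ μ₁ ⊗ μ₂)`. -/
def mutualInfo {α β : Type*} [Fintype α] [Fintype β] (μ : PMF (α × β)) : ℝ :=
  klDiv μ (prodPMF (μ.map Prod.fst) (μ.map Prod.snd))

/-- Shannon entropy of an `ℝ≥0∞`-valued mass function. -/
def entropy {α : Type*} [Fintype α] (f : α → ℝ≥0∞) : ℝ :=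
  -∑ x, (f x).toReal * Real.log (f x).toReal

/-- Conditional distribution of the second coordinate given the first:
`μ(a, ·) / μ_1(a)`. -/
def condDist {α β : Type*} (μ : PMF (α × β)) (a : α) : β → ℝ≥0∞ :=
  fun b => μ (a, b) / (μ.map Prod.fst) a

/-- Model-output joint: the law of `(X, Y_θ)` where `X ∼ μX` and `Y_θ ∼ θ(X)`. -/
def modelJoint {α β : Type*} (μX : PMF α) (θ : α → PMF β) : PMF (α × β) :=
  μX.bind fun x => (θ x).map (Prod.mk x)

/-- Marginal of a PMF on `U × A × D` on the first coordinate. -/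
def margU {U A D : Type*} (μ : PMF (U × A × D)) : PMF U := μ.map fun p => p.1

/-- Marginal of a PMF on `U × A × D` on the second coordinate. -/
def margA {U A D : Type*} (μ : PMF (U × A × D)) : PMF A := μ.map fun p => p.2.1

/-- Marginal of a PMF on `U × A × D` on the third coordinate. -/
def margD {U A D : Type*} (μ : PMF (U × A × D)) : PMF D := μ.map fun p => p.2.2


-- auxiliary lemmas
lemma mix_apply {α : Type*} [Fintype α] (μ ν : PMF α) (x : α) :
    mix μ ν x = (μ x + ν x) / 2 := rfl

lemma mix_comm {α : Type*} [Fintype α] (μ ν : PMF α) : mix μ ν = mix ν μ := by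
  ext x; rw [mix_apply, mix_apply, add_comm]

lemma pmfmap_apply_eq_sum {γ α : Type*} [Fintype γ] [DecidableEq α]
    (P : PMF γ) (f : γ → α) (a : α) :
    P.map f a = ∑ g : γ, if f g = a then P g else 0 := by
  rw [PMF.map_apply, tsum_fintype]
  exact Finset.sum_congr rfl fun g _ => by simp [eq_comm]

lemma apply_le_map {γ α : Type*} (P : PMF γ) (f : γ → α) (g : γ) :
    P g ≤ P.map f (f g) := by
  classical
  rw [PMF.map_apply]
  calc P g = (if f g = f g then P g else 0) := by simp
  _ ≤ ∑' g', if f g = f g' then P g' else 0 := ENNReal.le_tsum g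

lemma klDiv_map_of_h {γ α : Type*} [Fintype γ] [Fintype α] [DecidableEq α]
    (P Q : PMF γ) (f : γ → α)
    (h : ∀ g, P g * (Q.map f) (f g) = Q g * (P.map f) (f g)) :
    klDiv P (mix P Q) = klDiv (P.map f) (mix (P.map f) (Q.map f)) := by
  unfold klDiv
  rw [← Finset.sum_fiberwise Finset.univ f
    (fun g => if P g = 0 then 0 else (P g).toReal * Real.log ((P g).toReal / ((mix P Q) g).toReal))]
  refine Finset.sum_congr rfl fun a _ => ?_
  by_cases hpa : (P.map f) a = 0
  · rw [if_pos hpa]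
    refine Finset.sum_eq_zero fun g hg => ?_
    have hfg : f g = a := (Finset.mem_filter.1 hg).2
    have : P g = 0 := by
      have := apply_le_map P f g
      rw [hfg, hpa] at this
      exact le_antisymm this zero_le
    rw [if_pos this]
  · rw [if_neg hpa]
    have hpaT : (P.map f) a ≠ ⊤ := PMF.apply_ne_top _ _
    have hqaT : (Q.map f) a ≠ ⊤ := PMF.apply_ne_top _ _
    set L : ℝ := Real.log (((P.map f) a).toReal / ((mix (P.map f) (Q.map f)) a).toReal) with hL
    have hsum : ∑ g ∈ Finset.univ.filter (fun g => f g = a),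
        (if P g = 0 then 0 else (P g).toReal * Real.log ((P g).toReal / ((mix P Q) g).toReal))
        = ∑ g ∈ Finset.univ.filter (fun g => f g = a), (P g).toReal * L := by
      refine Finset.sum_congr rfl fun g hg => ?_
      have hfg : f g = a := (Finset.mem_filter.1 hg).2
      by_cases hpg : P g = 0
      · rw [if_pos hpg, hpg]; simp
      rw [if_neg hpg]
      congr 1
      -- show the two logs agree
      have hkey : P g * ((mix (P.map f) (Q.map f)) a) = (P.map f) a * ((mix P Q) g) := by
        rw [mix_apply, mix_apply, ← mul_div_assoc, ← mul_div_assoc]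
        congr 1
        have hg2 := h g
        rw [hfg] at hg2
        rw [mul_add, mul_add, hg2]
        ring
      have hMg : (mix P Q) g ≠ 0 := by
        rw [mix_apply]
        simp only [ne_eq, ENNReal.div_eq_zero_iff, add_eq_zero, ENNReal.ofNat_ne_top]
        tauto
      have hMgT : (mix P Q) g ≠ ⊤ := PMF.apply_ne_top _ _
      have hMa : (mix (P.map f) (Q.map f)) a ≠ 0 := by
        rw [mix_apply]
        simp only [ne_eq, ENNReal.div_eq_zero_iff, add_eq_zero, ENNReal.ofNat_ne_top]
        tauto
      have hMaT : (mix (P.map f) (Q.map f)) a ≠ ⊤ := PMF.apply_ne_top _ _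
      have hreal : (P g).toReal * ((mix (P.map f) (Q.map f)) a).toReal
          = ((P.map f) a).toReal * ((mix P Q) g).toReal := by
        rw [← ENNReal.toReal_mul, ← ENNReal.toReal_mul, hkey]
      have h1 : ((mix P Q) g).toReal > 0 :=
        ENNReal.toReal_pos hMg hMgT
      have h2 : ((mix (P.map f) (Q.map f)) a).toReal > 0 :=
        ENNReal.toReal_pos hMa hMaT
      rw [hL]
      congr 1
      rw [div_eq_div_iff h1.ne' h2.ne']
      linarith [hreal]
    rw [hsum, ← Finset.sum_mul]
    congr 1
    rw [pmfmap_apply_eq_sum P f a, ← Finset.sum_filter,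
      ENNReal.toReal_sum (fun g _ => PMF.apply_ne_top _ _)]

lemma map_mix {γ α : Type*} [Fintype γ] [Fintype α] [DecidableEq α]
    (P Q : PMF γ) (f : γ → α) :
    (mix P Q).map f = mix (P.map f) (Q.map f) := by
  ext a
  rw [mix_apply, pmfmap_apply_eq_sum, pmfmap_apply_eq_sum, pmfmap_apply_eq_sum]
  rw [← Finset.sum_filter, ← Finset.sum_filter, ← Finset.sum_filter]
  simp only [mix_apply, div_eq_mul_inv, ← Finset.sum_mul, Finset.sum_add_distrib]

lemma jsDiv_map_of_h {γ α : Type*} [Fintype γ] [Fintype α] [DecidableEq α]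
    (P Q : PMF γ) (f : γ → α)
    (h : ∀ g, P g * (Q.map f) (f g) = Q g * (P.map f) (f g)) :
    jsDiv P Q = jsDiv (P.map f) (Q.map f) := by
  have h' : ∀ g, Q g * (P.map f) (f g) = P g * (Q.map f) (f g) := fun g => (h g).symm
  unfold jsDiv
  rw [klDiv_map_of_h P Q f h, mix_comm P Q, klDiv_map_of_h Q P f h',
    mix_comm (Q.map f) (P.map f)]


lemma mkcross {γ α : Type*} (P Q : PMF γ) (f : γ → α) (g : γ)
    (h1 : P.map f (f g) ≠ 0) (h2 : Q.map f (f g) ≠ 0)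
    (hdiv : P g / P.map f (f g) = Q g / Q.map f (f g)) :
    P g * (Q.map f) (f g) = Q g * (P.map f) (f g) := by
  rw [ENNReal.div_eq_div_iff h2 (PMF.apply_ne_top _ _) h1 (PMF.apply_ne_top _ _)] at hdiv
  rw [mul_comm (P g), mul_comm (Q g)]
  exact hdiv

lemma zerocase {γ α : Type*} (P Q : PMF γ) (f : γ → α) (g : γ)
    (h : P.map f (f g) = 0 ∨ Q.map f (f g) = 0) :
    P g * (Q.map f) (f g) = Q g * (P.map f) (f g) := by
  rcases h with h1 | h2
  · have hg0 : P g = 0 := le_antisymm (h1 ▸ apply_le_map P f g) zero_le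
    rw [hg0, h1, zero_mul, mul_zero]
  · have hg0 : Q g = 0 := le_antisymm (h2 ▸ apply_le_map Q f g) zero_le
    rw [hg0, h2, zero_mul, mul_zero]


/-- under coordinate-wise equality of conditionals between `P` and `Q`
on `U × A × D`, any bound `E ≤ Ĥ·√(2·D_JS(P‖Q)) + c` (with `Ĥ, c ≥ 0`) yields
`E ≤ √(2/3)·Ĥ·(√D_JS(P_u‖Q_u) + √D_JS(P_a‖Q_a) + √D_JS(P_d‖Q_d)) + c`. -/
theorem bound_transfer_to_marginal_jsDiv
    {U A D : Type*} [Fintype U] [Nonempty U] [Fintype A] [Nonempty A]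
    [Fintype D] [Nonempty D]
    (P Q : PMF (U × A × D))
    (hU : ∀ u : U, margU P u ≠ 0 → margU Q u ≠ 0 →
      ∀ (a : A) (d : D), P (u, a, d) / margU P u = Q (u, a, d) / margU Q u)
    (hA : ∀ a : A, margA P a ≠ 0 → margA Q a ≠ 0 →
      ∀ (u : U) (d : D), P (u, a, d) / margA P a = Q (u, a, d) / margA Q a)
    (hD : ∀ d : D, margD P d ≠ 0 → margD Q d ≠ 0 →
      ∀ (u : U) (a : A), P (u, a, d) / margD P d = Q (u, a, d) / margD Q d)
    (E hH c : ℝ) (hH0 : 0 ≤ hH) (hc0 : 0 ≤ c)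
    (hE : E ≤ hH * Real.sqrt (2 * jsDiv P Q) + c) :
    E ≤ Real.sqrt (2 / 3) * hH
        * (Real.sqrt (jsDiv (margU P) (margU Q))
          + Real.sqrt (jsDiv (margA P) (margA Q))
          + Real.sqrt (jsDiv (margD P) (margD Q))) + c := by
  classical
  have jsU : jsDiv P Q = jsDiv (margU P) (margU Q) := by
    refine jsDiv_map_of_h P Q (fun p => p.1) ?_
    rintro ⟨u, a, d⟩
    by_cases h1 : margU P u = 0
    · exact zerocase P Q (fun p => p.1) (u, a, d) (Or.inl h1)
    by_cases h2 : margU Q u = 0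
    · exact zerocase P Q (fun p => p.1) (u, a, d) (Or.inr h2)
    exact mkcross P Q (fun p => p.1) (u, a, d) h1 h2 (hU u h1 h2 a d)
  have jsA : jsDiv P Q = jsDiv (margA P) (margA Q) := by
    refine jsDiv_map_of_h P Q (fun p => p.2.1) ?_
    rintro ⟨u, a, d⟩
    by_cases h1 : margA P a = 0
    · exact zerocase P Q (fun p => p.2.1) (u, a, d) (Or.inl h1)
    by_cases h2 : margA Q a = 0
    · exact zerocase P Q (fun p => p.2.1) (u, a, d) (Or.inr h2)
    exact mkcross P Q (fun p => p.2.1) (u, a, d) h1 h2 (hA a h1 h2 u d)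
  have jsD : jsDiv P Q = jsDiv (margD P) (margD Q) := by
    refine jsDiv_map_of_h P Q (fun p => p.2.2) ?_
    rintro ⟨u, a, d⟩
    by_cases h1 : margD P d = 0
    · exact zerocase P Q (fun p => p.2.2) (u, a, d) (Or.inl h1)
    by_cases h2 : margD Q d = 0
    · exact zerocase P Q (fun p => p.2.2) (u, a, d) (Or.inr h2)
    exact mkcross P Q (fun p => p.2.2) (u, a, d) h1 h2 (hD d h1 h2 u a)
  rw [← jsU, ← jsA, ← jsD]
  set J := jsDiv P Q with hJdef
  have sqrt9 : Real.sqrt 9 = 3 := by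
    rw [show (9:ℝ) = 3 ^ 2 by norm_num, Real.sqrt_sq (by norm_num)]
  have s6 : Real.sqrt 6 = 3 * Real.sqrt (2/3) := by
    rw [show (6:ℝ) = 9 * (2/3) by norm_num, Real.sqrt_mul (by norm_num) (2/3), sqrt9]
  have key : Real.sqrt (2 * J) ≤ Real.sqrt (2/3) * (Real.sqrt J + Real.sqrt J + Real.sqrt J) := by
    rcases le_or_gt 0 J with hJ | hJ
    · have h1 : Real.sqrt (2 * J) ≤ Real.sqrt (6 * J) :=
        Real.sqrt_le_sqrt (by linarith)
      have h2 : Real.sqrt (6 * J) = Real.sqrt 6 * Real.sqrt J :=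
        Real.sqrt_mul (by norm_num) J
      rw [h2, s6] at h1
      linarith [h1]
    · have h1 : Real.sqrt (2 * J) = 0 := Real.sqrt_eq_zero'.2 (by linarith)
      have h2 : Real.sqrt J = 0 := Real.sqrt_eq_zero'.2 (by linarith)
      rw [h1, h2]
      positivity
  calc E ≤ hH * Real.sqrt (2 * J) + c := hE
  _ ≤ hH * (Real.sqrt (2/3) * (Real.sqrt J + Real.sqrt J + Real.sqrt J)) + c := by
      have := mul_le_mul_of_nonneg_left key hH0
      linarith
  _ = Real.sqrt (2/3) * hH * (Real.sqrt J + Real.sqrt J + Real.sqrt J) + c := by ring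

end
end

section
/- Let U, A, D be finite nonempty types and let P, Q be probability mass functions on the product U × A × D. Assume that for each coordinate z ∈ {u, a, d} and for every value of that coordinate having positive probability under both P and Q, the conditional distribution of the remaining two coordinates given that value of coordinate z is the same under P and Q. Then the Jensen–Shannon divergence of the joints equals the average of the Jensen–Shannon divergences of the one-dimensional marginals: D_JS(P ‖ Q) = (1/3) · (D_JS(P_u ‖ Q_u) + D_JS(P_a ‖ Q_a) + D_JS(P_d ‖ Q_d)), where P_u, P_a, P_d (resp. Q_u, Q_a, Q_d) denote the one-dimensional marginals of P (resp. Q) on U, A, D. -/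
open scoped BigOperators ENNReal

noncomputable section

lemma map_apply_eq_sum {γ α : Type*} [Fintype γ] [DecidableEq α] (R : PMF γ) (f : γ → α) (a : α) :
    R.map f a = ∑ x ∈ Finset.univ.filter (fun x => f x = a), R x := by
  rw [PMF.map_apply, tsum_fintype, Finset.sum_filter]
  congr 1; ext x
  by_cases hx : f x = a
  · simp [hx]
  · simp [hx]; exact fun h => absurd h.symm hx

lemma klDiv_mix_map {γ α : Type*} [Fintype γ] [Fintype α] [DecidableEq α]
    (P Q : PMF γ) (f : γ → α)
    (h : ∀ x : γ, P.map f (f x) ≠ 0 → Q.map f (f x) ≠ 0 →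
      P x / P.map f (f x) = Q x / Q.map f (f x)) :
    klDiv P (mix P Q) = klDiv (P.map f) (mix (P.map f) (Q.map f)) := by
  unfold klDiv
  rw [← Finset.sum_fiberwise Finset.univ f
    (fun x => if P x = 0 then 0 else
      (P x).toReal * Real.log ((P x).toReal / ((mix P Q) x).toReal))]
  refine Finset.sum_congr rfl fun a _ => ?_
  have hPa := map_apply_eq_sum P f a
  have hQa := map_apply_eq_sum Q f a
  by_cases h0 : P.map f a = 0
  · rw [if_pos h0]
    refine Finset.sum_eq_zero fun x hx => ?_
    have hx0 : P x = 0 := by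
      have := Finset.sum_eq_zero_iff.mp (hPa ▸ h0) x hx
      exact this
    simp [hx0]
  · rw [if_neg h0]
    have hmPt : P.map f a ≠ ⊤ := PMF.apply_ne_top _ a
    have hmQt : Q.map f a ≠ ⊤ := PMF.apply_ne_top _ a
    set C : ℝ := Real.log ((P.map f a).toReal / ((mix (P.map f) (Q.map f)) a).toReal) with hC
    have key : ∀ x ∈ Finset.univ.filter (fun x => f x = a),
        (if P x = 0 then 0 else
          (P x).toReal * Real.log ((P x).toReal / ((mix P Q) x).toReal))
        = (P x).toReal * C := by
      intro x hx
      have hfx : f x = a := by simpa using hx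
      by_cases hP0 : P x = 0
      · simp [hP0]
      · rw [if_neg hP0]
        congr 1
        have hPt : P x ≠ ⊤ := PMF.apply_ne_top _ x
        have hQt : Q x ≠ ⊤ := PMF.apply_ne_top _ x
        set p := (P x).toReal with hp
        set q := (Q x).toReal with hq
        set mp := (P.map f a).toReal with hmp
        set mq := (Q.map f a).toReal with hmq
        have hppos : 0 < p := ENNReal.toReal_pos hP0 hPt
        have hmppos : 0 < mp := ENNReal.toReal_pos h0 hmPt
        have hqnn : 0 ≤ q := ENNReal.toReal_nonneg
        have hmqnn : 0 ≤ mq := ENNReal.toReal_nonneg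
        have hcross : p * mq = mp * q := by
          by_cases hQ0 : Q.map f a = 0
          · have hQx : Q x = 0 := by
              have hle : Q x ≤ Q.map f a := by
                rw [hQa]
                exact Finset.single_le_sum (fun _ _ => zero_le) hx
              exact le_antisymm (hQ0 ▸ hle) zero_le
            simp [hq, hmq, hQx, hQ0]
          · have hd := h x (by rw [hfx]; exact h0) (by rw [hfx]; exact hQ0)
            rw [hfx] at hd
            have hd' : p / mp = q / mq := by
              have := congrArg ENNReal.toReal hd
              rwa [ENNReal.toReal_div, ENNReal.toReal_div] at this
            have hmqpos : 0 < mq := ENNReal.toReal_pos hQ0 hmQt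
            have := (div_eq_div_iff (ne_of_gt hmppos) (ne_of_gt hmqpos)).mp hd'
            linarith [this]
        have e1 : ((mix P Q) x).toReal = (p + q) / 2 := by
          rw [mix_apply, ENNReal.toReal_div, ENNReal.toReal_add hPt hQt,
            ENNReal.toReal_ofNat]
        have e2 : ((mix (P.map f) (Q.map f)) a).toReal = (mp + mq) / 2 := by
          rw [mix_apply, ENNReal.toReal_div, ENNReal.toReal_add hmPt hmQt,
            ENNReal.toReal_ofNat]
        rw [hC, e1, e2]
        congr 1
        have hd1 : (0:ℝ) < (p + q) / 2 := by linarith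
        have hd2 : (0:ℝ) < (mp + mq) / 2 := by linarith
        rw [div_eq_div_iff (ne_of_gt hd1) (ne_of_gt hd2)]
        ring_nf
        nlinarith [hcross]
    rw [Finset.sum_congr rfl key, ← Finset.sum_mul]
    congr 1
    rw [hPa, ENNReal.toReal_sum (fun x _ => PMF.apply_ne_top _ x)]

lemma jsDiv_map {γ α : Type*} [Fintype γ] [Fintype α] [DecidableEq α]
    (P Q : PMF γ) (f : γ → α)
    (h : ∀ x : γ, P.map f (f x) ≠ 0 → Q.map f (f x) ≠ 0 →
      P x / P.map f (f x) = Q x / Q.map f (f x)) :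
    jsDiv P Q = jsDiv (P.map f) (Q.map f) := by
  have h' : ∀ x : γ, Q.map f (f x) ≠ 0 → P.map f (f x) ≠ 0 →
      Q x / Q.map f (f x) = P x / P.map f (f x) := fun x h1 h2 => (h x h2 h1).symm
  unfold jsDiv
  rw [klDiv_mix_map P Q f h]
  rw [mix_comm P Q, klDiv_mix_map Q P f h', mix_comm (Q.map f) (P.map f)]


/-- if, for each coordinate `z ∈ {u, a, d}`, the conditional distribution of
the remaining two coordinates given any value of coordinate `z` with positive probability
under both `P` and `Q` is the same under `P` and `Q`, then the Jensen–Shannon divergence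
of the joints is the average of the coordinate-marginal Jensen–Shannon divergences. -/
theorem jsDiv_eq_third_sum_marginal_jsDiv
    {U A D : Type*} [Fintype U] [Nonempty U] [Fintype A] [Nonempty A]
    [Fintype D] [Nonempty D]
    (P Q : PMF (U × A × D))
    (hU : ∀ u : U, margU P u ≠ 0 → margU Q u ≠ 0 →
      ∀ (a : A) (d : D), P (u, a, d) / margU P u = Q (u, a, d) / margU Q u)
    (hA : ∀ a : A, margA P a ≠ 0 → margA Q a ≠ 0 →
      ∀ (u : U) (d : D), P (u, a, d) / margA P a = Q (u, a, d) / margA Q a)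
    (hD : ∀ d : D, margD P d ≠ 0 → margD Q d ≠ 0 →
      ∀ (u : U) (a : A), P (u, a, d) / margD P d = Q (u, a, d) / margD Q d) :
    jsDiv P Q
      = (1 / 3) * (jsDiv (margU P) (margU Q) + jsDiv (margA P) (margA Q)
        + jsDiv (margD P) (margD Q)) := by
  classical
  have h1 : ∀ x : U × A × D, P.map (fun p => p.1) ((fun p : U × A × D => p.1) x) ≠ 0 →
      Q.map (fun p => p.1) ((fun p : U × A × D => p.1) x) ≠ 0 →
      P x / P.map (fun p => p.1) ((fun p : U × A × D => p.1) x)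
        = Q x / Q.map (fun p => p.1) ((fun p : U × A × D => p.1) x) := by
    intro x hp hq
    have := hU x.1 hp hq x.2.1 x.2.2
    simpa [margU, PMF.map_apply] using this
  have h2 : ∀ x : U × A × D, P.map (fun p => p.2.1) ((fun p : U × A × D => p.2.1) x) ≠ 0 →
      Q.map (fun p => p.2.1) ((fun p : U × A × D => p.2.1) x) ≠ 0 →
      P x / P.map (fun p => p.2.1) ((fun p : U × A × D => p.2.1) x)
        = Q x / Q.map (fun p => p.2.1) ((fun p : U × A × D => p.2.1) x) := by
    intro x hp hq
    have := hA x.2.1 hp hq x.1 x.2.2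
    simpa [margA, PMF.map_apply] using this
  have h3 : ∀ x : U × A × D, P.map (fun p => p.2.2) ((fun p : U × A × D => p.2.2) x) ≠ 0 →
      Q.map (fun p => p.2.2) ((fun p : U × A × D => p.2.2) x) ≠ 0 →
      P x / P.map (fun p => p.2.2) ((fun p : U × A × D => p.2.2) x)
        = Q x / Q.map (fun p => p.2.2) ((fun p : U × A × D => p.2.2) x) := by
    intro x hp hq
    have := hD x.2.2 hp hq x.1 x.2.1
    simpa [margD, PMF.map_apply] using this
  have eU : jsDiv P Q = jsDiv (margU P) (margU Q) := jsDiv_map P Q (fun p => p.1) h1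
  have eA : jsDiv P Q = jsDiv (margA P) (margA Q) := jsDiv_map P Q (fun p => p.2.1) h2
  have eD : jsDiv P Q = jsDiv (margD P) (margD Q) := jsDiv_map P Q (fun p => p.2.2) h3
  rw [← eU, ← eA, ← eD]
  ring

end
end

section
/- Let U, A, D be finite nonempty types and let P, Q be probability mass functions on the product U × A × D. Assume that for each coordinate z ∈ {u, a, d} and for every value of that coordinate having positive probability under both P and Q, the conditional distribution of the remaining two coordinates given that value of coordinate z is the same under P and Q. Then √(2 · D_JS(P ‖ Q)) ≤ √(2/3) · (√(D_JS(P_u ‖ Q_u)) + √(D_JS(P_a ‖ Q_a)) + √(D_JS(P_d ‖ Q_d))), where P_u, P_a, P_d (resp. Q_u, Q_a, Q_d) denote the one-dimensional marginals of P (resp. Q) on U, A, D. -/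
open scoped BigOperators ENNReal

noncomputable section

section Aux

set_option linter.unusedSectionVars false

variable {γ α : Type*} [Fintype γ] [Fintype α] [DecidableEq α]

lemma pmf_map_apply_eq_sum (P : PMF γ) (f : γ → α) (a : α) :
    P.map f a = ∑ x, if a = f x then P x else 0 := by
  rw [PMF.map_apply, tsum_fintype]
  apply Finset.sum_congr rfl
  intro x _
  by_cases h : a = f x <;> simp [h]

lemma pmf_le_map_self (P : PMF γ) (f : γ → α) (x : γ) :
    P x ≤ P.map f (f x) := by
  rw [pmf_map_apply_eq_sum]
  have := Finset.single_le_sum (f := fun y => if f x = f y then P y else 0)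
    (fun i _ => zero_le) (Finset.mem_univ x)
  simpa using this

lemma pmf_map_toReal (P : PMF γ) (f : γ → α) (a : α) :
    (P.map f a).toReal = ∑ x, if a = f x then (P x).toReal else 0 := by
  rw [pmf_map_apply_eq_sum, ENNReal.toReal_sum (fun x _ => by
    split <;> simp [PMF.apply_ne_top])]
  apply Finset.sum_congr rfl
  intro x _
  split <;> simp

lemma mix_apply_s4 (P Q : PMF γ) (x : γ) : mix P Q x = (P x + Q x) / 2 := rfl

lemma mix_map (P Q : PMF γ) (f : γ → α) :
    (mix P Q).map f = mix (P.map f) (Q.map f) := by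
  ext a
  show (mix P Q).map f a = (P.map f a + Q.map f a) / 2
  rw [pmf_map_apply_eq_sum, pmf_map_apply_eq_sum, pmf_map_apply_eq_sum]
  show (∑ x, if a = f x then (P x + Q x) / 2 else 0) = _
  simp only [div_eq_mul_inv]
  rw [← Finset.sum_add_distrib, Finset.sum_mul]

  apply Finset.sum_congr rfl
  intro x _
  by_cases h : a = f x <;> simp [h]

lemma ennreal_cross {a b c d : ℝ≥0∞} (hb : b ≠ 0) (hb' : b ≠ ⊤) (hd : d ≠ 0)
    (hd' : d ≠ ⊤) (h : a / b = c / d) : a * d = c * b := by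
  calc a * d = a / b * b * d := by rw [ENNReal.div_mul_cancel hb hb']
    _ = c / d * d * b := by rw [h]; exact mul_right_comm _ _ _
    _ = c * b := by rw [ENNReal.div_mul_cancel hd hd']

lemma klDiv_map_of_cond (P M : PMF γ) (f : γ → α)
    (hM : ∀ x, P x ≠ 0 → M x ≠ 0)
    (hratio : ∀ x, P x ≠ 0 → P x * (M.map f) (f x) = M x * (P.map f) (f x)) :
    klDiv P M = klDiv (P.map f) (M.map f) := by
  have key : ∀ x : γ,
      (if P x = 0 then 0 else (P x).toReal * Real.log ((P x).toReal / (M x).toReal))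
      = (P x).toReal * Real.log (((P.map f) (f x)).toReal / ((M.map f) (f x)).toReal) := by
    intro x
    by_cases hx : P x = 0
    · simp [hx]
    · rw [if_neg hx]
      congr 2
      have hPf : (P.map f) (f x) ≠ 0 := by
        intro h
        exact hx (le_antisymm (h ▸ pmf_le_map_self P f x) zero_le)
      have hMx := hM x hx
      have hMf : (M.map f) (f x) ≠ 0 := by
        intro h
        have h2 := hratio x hx
        rw [h, mul_zero] at h2
        exact (mul_ne_zero hMx hPf) h2.symm
      have hre : (P x).toReal * ((M.map f) (f x)).toReal
          = (M x).toReal * ((P.map f) (f x)).toReal := by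
        rw [← ENNReal.toReal_mul, ← ENNReal.toReal_mul, hratio x hx]
      have h1 : 0 < (M x).toReal := ENNReal.toReal_pos hMx (PMF.apply_ne_top M x)
      have h2 : 0 < ((M.map f) (f x)).toReal :=
        ENNReal.toReal_pos hMf (PMF.apply_ne_top _ _)
      rw [div_eq_div_iff h1.ne' h2.ne']
      linear_combination hre
  unfold klDiv
  rw [Finset.sum_congr rfl (fun x _ => key x)]
  have rhs : ∀ a : α,
      (if (P.map f) a = 0 then 0
        else ((P.map f) a).toReal * Real.log (((P.map f) a).toReal / ((M.map f) a).toReal))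
      = ((P.map f) a).toReal * Real.log (((P.map f) a).toReal / ((M.map f) a).toReal) := by
    intro a
    by_cases h : (P.map f) a = 0
    · rw [if_pos h, h]; simp
    · rw [if_neg h]
  rw [Finset.sum_congr rfl (fun a _ => rhs a)]
  rw [← Finset.sum_fiberwise Finset.univ f
    (fun x => (P x).toReal * Real.log (((P.map f) (f x)).toReal / ((M.map f) (f x)).toReal))]
  apply Finset.sum_congr rfl
  intro a _
  have hfib : ∀ x ∈ Finset.filter (fun x => f x = a) Finset.univ,
      (P x).toReal * Real.log (((P.map f) (f x)).toReal / ((M.map f) (f x)).toReal)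
      = (P x).toReal * Real.log (((P.map f) a).toReal / ((M.map f) a).toReal) := by
    intro x hx
    rw [(Finset.mem_filter.mp hx).2]
  rw [Finset.sum_congr rfl hfib, ← Finset.sum_mul]
  congr 1
  rw [pmf_map_toReal, Finset.sum_filter]
  apply Finset.sum_congr rfl
  intro x _
  by_cases h : f x = a
  · simp [h]
  · simp [h, Ne.symm h]

lemma jsDiv_map_of_cond (P Q : PMF γ) (f : γ → α)
    (h : ∀ x : γ, P x ≠ 0 ∨ Q x ≠ 0 → (P.map f) (f x) ≠ 0 → (Q.map f) (f x) ≠ 0 →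
      P x * (Q.map f) (f x) = Q x * (P.map f) (f x)) :
    jsDiv P Q = jsDiv (P.map f) (Q.map f) := by
  have qle : ∀ x : γ, Q x ≤ Q.map f (f x) := pmf_le_map_self Q f
  have ple : ∀ x : γ, P x ≤ P.map f (f x) := pmf_le_map_self P f
  have hratioP : ∀ x, P x ≠ 0 →
      P x * ((mix P Q).map f) (f x) = mix P Q x * (P.map f) (f x) := by
    intro x hx
    rw [mix_map, mix_apply_s4, mix_apply_s4]
    have hPf : (P.map f) (f x) ≠ 0 := by
      intro hh; exact hx (le_antisymm (hh ▸ ple x) zero_le)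
    by_cases hQf : (Q.map f) (f x) = 0
    · have hQx : Q x = 0 := le_antisymm (hQf ▸ qle x) zero_le
      rw [hQx, hQf, add_zero, add_zero]
      simp only [div_eq_mul_inv, ← mul_assoc]
      exact mul_right_comm _ _ _
    · have hcross := h x (Or.inl hx) hPf hQf
      have key : P x * ((P.map f) (f x) + (Q.map f) (f x))
          = (P x + Q x) * (P.map f) (f x) := by
        rw [mul_add, add_mul, hcross]
      simp only [div_eq_mul_inv, ← mul_assoc]
      rw [key]
      exact mul_right_comm _ _ _
  have hratioQ : ∀ x, Q x ≠ 0 →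
      Q x * ((mix P Q).map f) (f x) = mix P Q x * (Q.map f) (f x) := by
    intro x hx
    rw [mix_map, mix_apply_s4, mix_apply_s4]
    have hQf : (Q.map f) (f x) ≠ 0 := by
      intro hh; exact hx (le_antisymm (hh ▸ qle x) zero_le)
    by_cases hPf : (P.map f) (f x) = 0
    · have hPx : P x = 0 := le_antisymm (hPf ▸ ple x) zero_le
      rw [hPx, hPf, zero_add, zero_add]
      simp only [div_eq_mul_inv, ← mul_assoc]
      exact mul_right_comm _ _ _
    · have hcross := h x (Or.inr hx) hPf hQf
      have key : Q x * ((P.map f) (f x) + (Q.map f) (f x))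
          = (P x + Q x) * (Q.map f) (f x) := by
        rw [mul_add, add_mul, ← hcross]
      simp only [div_eq_mul_inv, ← mul_assoc]
      rw [key]
      exact mul_right_comm _ _ _
  have hMne : ∀ x : γ, P x ≠ 0 ∨ Q x ≠ 0 → mix P Q x ≠ 0 := by
    intro x hx hzero
    rw [mix_apply_s4, ENNReal.div_eq_zero_iff] at hzero
    rcases hzero with hzero | hzero
    · rcases hx with hx | hx
      · exact hx (by simpa using (add_eq_zero.mp hzero).1)
      · exact hx (by simpa using (add_eq_zero.mp hzero).2)
    · exact ENNReal.ofNat_ne_top hzero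
  unfold jsDiv
  rw [klDiv_map_of_cond P (mix P Q) f (fun x hx => hMne x (Or.inl hx)) hratioP,
    klDiv_map_of_cond Q (mix P Q) f (fun x hx => hMne x (Or.inr hx)) hratioQ,
    mix_map]

end Aux

/-- under coordinate-wise equality of conditionals between `P` and `Q`
on `U × A × D`, one has
`√(2·D_JS(P‖Q)) ≤ √(2/3) · (√D_JS(P_u‖Q_u) + √D_JS(P_a‖Q_a) + √D_JS(P_d‖Q_d))`. -/
theorem sqrt_jsDiv_le_sum_sqrt_marginal_jsDiv
    {U A D : Type*} [Fintype U] [Nonempty U] [Fintype A] [Nonempty A]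
    [Fintype D] [Nonempty D]
    (P Q : PMF (U × A × D))
    (hU : ∀ u : U, margU P u ≠ 0 → margU Q u ≠ 0 →
      ∀ (a : A) (d : D), P (u, a, d) / margU P u = Q (u, a, d) / margU Q u)
    (hA : ∀ a : A, margA P a ≠ 0 → margA Q a ≠ 0 →
      ∀ (u : U) (d : D), P (u, a, d) / margA P a = Q (u, a, d) / margA Q a)
    (hD : ∀ d : D, margD P d ≠ 0 → margD Q d ≠ 0 →
      ∀ (u : U) (a : A), P (u, a, d) / margD P d = Q (u, a, d) / margD Q d) :
    Real.sqrt (2 * jsDiv P Q)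
      ≤ Real.sqrt (2 / 3)
        * (Real.sqrt (jsDiv (margU P) (margU Q))
          + Real.sqrt (jsDiv (margA P) (margA Q))
          + Real.sqrt (jsDiv (margD P) (margD Q))) := by
  classical
  have hu : jsDiv P Q = jsDiv (margU P) (margU Q) := by
    apply jsDiv_map_of_cond P Q (fun p => p.1)
    intro x _ hPf hQf
    exact ennreal_cross hPf (PMF.apply_ne_top _ _) hQf (PMF.apply_ne_top _ _)
      (hU x.1 hPf hQf x.2.1 x.2.2)
  have ha : jsDiv P Q = jsDiv (margA P) (margA Q) := by
    apply jsDiv_map_of_cond P Q (fun p => p.2.1)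
    intro x _ hPf hQf
    exact ennreal_cross hPf (PMF.apply_ne_top _ _) hQf (PMF.apply_ne_top _ _)
      (hA x.2.1 hPf hQf x.1 x.2.2)
  have hd : jsDiv P Q = jsDiv (margD P) (margD Q) := by
    apply jsDiv_map_of_cond P Q (fun p => p.2.2)
    intro x _ hPf hQf
    exact ennreal_cross hPf (PMF.apply_ne_top _ _) hQf (PMF.apply_ne_top _ _)
      (hD x.2.2 hPf hQf x.1 x.2.1)
  rw [← hu, ← ha, ← hd]
  set J := jsDiv P Q with hJ
  rw [show Real.sqrt J + Real.sqrt J + Real.sqrt J = 3 * Real.sqrt J by ring]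
  rw [Real.sqrt_mul (by norm_num : (0:ℝ) ≤ 2) J]
  rw [show Real.sqrt (2/3) * (3 * Real.sqrt J) = (3 * Real.sqrt (2/3)) * Real.sqrt J by ring]
  apply mul_le_mul_of_nonneg_right _ (Real.sqrt_nonneg J)
  have h9 : Real.sqrt 9 = 3 := by
    rw [show (9:ℝ) = 3^2 by norm_num, Real.sqrt_sq (by norm_num : (0:ℝ) ≤ 3)]
  have : (3:ℝ) * Real.sqrt (2/3) = Real.sqrt (9 * (2/3)) := by
    rw [Real.sqrt_mul (by norm_num : (0:ℝ) ≤ 9), h9]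
  rw [this]
  apply Real.sqrt_le_sqrt
  norm_num

end
end

section
/- Let U, A, D be finite nonempty types and let P, M be probability mass functions on the product U × A × D with P absolutely continuous with respect to M. Assume that for each coordinate z ∈ {u, a, d} and for every value of that coordinate having positive probability under P, the conditional distribution under P of the remaining two coordinates given that value of coordinate z equals the corresponding conditional distribution under M. Then 3 · D_KL(P ‖ M) = D_KL(P_u ‖ M_u) + D_KL(P_a ‖ M_a) + D_KL(P_d ‖ M_d), where P_u, P_a, P_d (resp. M_u, M_a, M_d) denote the one-dimensional marginals of P (resp. M) on U, A, D. -/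
open scoped BigOperators ENNReal

noncomputable section

lemma pmfMap_apply_sum {α Z : Type*} [Fintype α] [DecidableEq Z] (P : PMF α) (f : α → Z) (z : Z) :
    P.map f z = ∑ x ∈ Finset.univ.filter (fun x => f x = z), P x := by
  rw [PMF.map_apply, tsum_fintype, Finset.sum_filter]
  exact Finset.sum_congr rfl fun x _ => by by_cases h : z = f x <;> simp [h, Eq.comm]

lemma marg_ne_zero {α Z : Type*} [Fintype α] (P : PMF α) (f : α → Z) (x : α) (hx : P x ≠ 0) :
    P.map f (f x) ≠ 0 := by
  classical
  rw [pmfMap_apply_sum]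
  intro h
  exact hx (Finset.sum_eq_zero_iff.mp h x (by simp))

lemma cond_log {px pu mx mu : ℝ≥0∞} (hpx : px ≠ 0) (hpxt : px ≠ ⊤) (hmx : mx ≠ 0)
    (hmxt : mx ≠ ⊤) (hpu : pu ≠ 0) (hput : pu ≠ ⊤) (hmut : mu ≠ ⊤)
    (h : px / pu = mx / mu) :
    Real.log (px.toReal / mx.toReal) = Real.log (pu.toReal / mu.toReal) := by
  have hmu : mu ≠ 0 := by
    intro h0
    rw [h0, ENNReal.div_zero hmx] at h
    exact (ENNReal.div_lt_top hpxt hpu).ne h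
  have h' : px.toReal / pu.toReal = mx.toReal / mu.toReal := by
    rw [← ENNReal.toReal_div, ← ENNReal.toReal_div, h]
  have hpxr : 0 < px.toReal := ENNReal.toReal_pos hpx hpxt
  have hpur : 0 < pu.toReal := ENNReal.toReal_pos hpu hput
  have hmxr : 0 < mx.toReal := ENNReal.toReal_pos hmx hmxt
  have hmur : 0 < mu.toReal := ENNReal.toReal_pos hmu hmut
  have : px.toReal / mx.toReal = pu.toReal / mu.toReal := by
    rw [div_eq_div_iff hmxr.ne' hmur.ne']
    rw [div_eq_div_iff hpur.ne' hmur.ne'] at h'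
    nlinarith
  rw [this]

lemma klDiv_map_eq {α Z : Type*} [Fintype α] [Fintype Z] (P M : PMF α) (f : α → Z)
    (hrat : ∀ x, P x ≠ 0 →
      Real.log ((P x).toReal / (M x).toReal)
        = Real.log (((P.map f) (f x)).toReal / ((M.map f) (f x)).toReal)) :
    klDiv P M = klDiv (P.map f) (M.map f) := by
  classical
  set L : Z → ℝ := fun z => Real.log (((P.map f) z).toReal / ((M.map f) z).toReal) with hLdef
  have hL : klDiv P M = ∑ x, (P x).toReal * L (f x) := by
    unfold klDiv
    refine Finset.sum_congr rfl fun x _ => ?_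
    by_cases h : P x = 0
    · simp [h]
    · simp [h, hrat x h, hLdef]
  have hR : klDiv (P.map f) (M.map f) = ∑ z, ((P.map f) z).toReal * L z := by
    unfold klDiv
    refine Finset.sum_congr rfl fun z _ => ?_
    by_cases h : (P.map f) z = 0
    · simp [h]
    · rw [if_neg h]
  rw [hL, hR]
  rw [← Finset.sum_fiberwise_of_maps_to (g := f) (fun x _ => Finset.mem_univ (f x))]
  refine Finset.sum_congr rfl fun z _ => ?_
  rw [pmfMap_apply_sum, ENNReal.toReal_sum (fun x _ => PMF.apply_ne_top P x), Finset.sum_mul]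
  refine Finset.sum_congr rfl fun x hx => ?_
  rw [(Finset.mem_filter.mp hx).2]

/-- if `P ≪ M` on `U × A × D` and, for each coordinate, the conditional
distribution under `P` of the remaining two coordinates given any value of that coordinate
with positive `P`-probability equals the corresponding conditional under `M`, then
`3 · D_KL(P ‖ M) = D_KL(P_u ‖ M_u) + D_KL(P_a ‖ M_a) + D_KL(P_d ‖ M_d)`. -/
theorem three_mul_klDiv_eq_sum_marginal_klDiv
    {U A D : Type*} [Fintype U] [Nonempty U] [Fintype A] [Nonempty A]
    [Fintype D] [Nonempty D]
    (P M : PMF (U × A × D))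
    (hac : ∀ x, M x = 0 → P x = 0)
    (hU : ∀ u : U, margU P u ≠ 0 →
      ∀ (a : A) (d : D), P (u, a, d) / margU P u = M (u, a, d) / margU M u)
    (hA : ∀ a : A, margA P a ≠ 0 →
      ∀ (u : U) (d : D), P (u, a, d) / margA P a = M (u, a, d) / margA M a)
    (hD : ∀ d : D, margD P d ≠ 0 →
      ∀ (u : U) (a : A), P (u, a, d) / margD P d = M (u, a, d) / margD M d) :
    3 * klDiv P M
      = klDiv (margU P) (margU M) + klDiv (margA P) (margA M)
        + klDiv (margD P) (margD M) := by
  have hrat : ∀ (mg : U × A × D → ℝ≥0∞) (f : U × A × D → ℝ≥0∞) (x : U × A × D), True := fun _ _ _ => trivial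
  have kU : klDiv P M = klDiv (margU P) (margU M) := by
    apply klDiv_map_eq P M (fun p => p.1)
    rintro ⟨u, a, d⟩ hx
    have hmx : M (u, a, d) ≠ 0 := fun h => hx (hac _ h)
    have hpu : margU P u ≠ 0 := marg_ne_zero P (fun p => p.1) (u, a, d) hx
    exact cond_log hx (PMF.apply_ne_top _ _) hmx (PMF.apply_ne_top _ _) hpu
      (PMF.apply_ne_top (margU P) u) (PMF.apply_ne_top (margU M) u) (hU u hpu a d)
  have kA : klDiv P M = klDiv (margA P) (margA M) := by
    apply klDiv_map_eq P M (fun p => p.2.1)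
    rintro ⟨u, a, d⟩ hx
    have hmx : M (u, a, d) ≠ 0 := fun h => hx (hac _ h)
    have hpa : margA P a ≠ 0 := marg_ne_zero P (fun p => p.2.1) (u, a, d) hx
    exact cond_log hx (PMF.apply_ne_top _ _) hmx (PMF.apply_ne_top _ _) hpa
      (PMF.apply_ne_top (margA P) a) (PMF.apply_ne_top (margA M) a) (hA a hpa u d)
  have kD : klDiv P M = klDiv (margD P) (margD M) := by
    apply klDiv_map_eq P M (fun p => p.2.2)
    rintro ⟨u, a, d⟩ hx
    have hmx : M (u, a, d) ≠ 0 := fun h => hx (hac _ h)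
    have hpd : margD P d ≠ 0 := marg_ne_zero P (fun p => p.2.2) (u, a, d) hx
    exact cond_log hx (PMF.apply_ne_top _ _) hmx (PMF.apply_ne_top _ _) hpd
      (PMF.apply_ne_top (margD P) d) (PMF.apply_ne_top (margD M) d) (hD d hpd u a)
  rw [← kU, ← kA, ← kD]; ring


end
end
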